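/- arXiv:2109.05641 — 2 statements merged into one kernel-verified Lean document; each statement's English description precedes it below -/
import Mathlib

section
/- Let C ≥ 2 and d ≥ 1 be integers, h ∈ [0,1], and fix two distinct classes c, c' ∈ Fin C. Let V_1,…,V_d and U_1,…,U_d be 2d mutually independent Fin C-valued random variables, where each V_k has law ν_c and each U_k has law ν_{c'}. Let W^V be the aggregated label vector of (V_k) with anchor class c and W^U the aggregated label vector of (U_k) with anchor class c'. Then E[ ∑_{a ∈ Fin C} W^V_a · W^U_a ] = 2(h·d+1)(1−h)·d / ((C−1)(d+1)²) + (C−2)·((1−h)·d)² / ((C−1)²(d+1)²). -/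
open scoped BigOperators
open MeasureTheory ProbabilityTheory

/-- `Y` has law `ν_c`: it takes the value `c` with probability `h` and each of the
other `C - 1` values with probability `(1 - h)/(C - 1)`. -/
def HasLawNu {Ω : Type*} [MeasurableSpace Ω] {C : ℕ} (P : Measure Ω)
    (h : ℝ) (c : Fin C) (Y : Ω → Fin C) : Prop :=
  Measurable Y ∧
    ∀ a : Fin C, P (Y ⁻¹' {a}) =
      ENNReal.ofReal (if a = c then h else (1 - h) / ((C : ℝ) - 1))

/-- The aggregated label vector of the family `X` with anchor class `c`:
`W_a = (𝟙[a = c] + #{k : X_k = a})/(d+1)`. -/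
noncomputable def aggW {Ω : Type*} {C : ℕ} (d : ℕ) (c : Fin C)
    (X : Fin d → Ω → Fin C) (ω : Ω) (a : Fin C) : ℝ :=
  ((if a = c then (1 : ℝ) else 0) +
      (Finset.univ.filter fun k => X k ω = a).card) / ((d : ℝ) + 1)

/-!
Each coordinate `W_a` is an affine function of the label counts `#{k : X_k = a}`, so by
linearity `E[W^V_a] = (𝟙[a = c] + d ν_c(a))/(d+1)`. The two families are independent, hence so
are `W^V_a` and `W^U_a`, and the expectation of `∑ a, W^V_a W^U_a` is `∑ a, E[W^V_a] E[W^U_a]`.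
In that sum the two anchor classes each contribute `(1 + d h) d q/(d+1)²` and each of the other
`C - 2` classes contributes `(d q/(d+1))²`, where `q = (1 - h)/(C - 1)`.
-/

open Finset

section Independence

variable {Ω ι κ β : Type*} [MeasurableSpace Ω] {μ : Measure Ω} [MeasurableSpace β]
  [Fintype ι] [Fintype κ]

lemma ProbabilityTheory.iIndepFun.indepFun_sumElim {f : ι → Ω → β} {g : κ → Ω → β}
    (hfg : iIndepFun (Sum.elim f g) μ) (hf : ∀ i, Measurable (f i)) (hg : ∀ j, Measurable (g j)) :
    IndepFun (fun ω i ↦ f i ω) (fun ω j ↦ g j ω) μ := by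
  have hST := hfg.indepFun_finset (univ.map .inl) (univ.map .inr)
    (by simp [Finset.disjoint_left]) (Sum.forall.2 ⟨hf, hg⟩)
  exact hST.comp (φ := fun x i ↦ x ⟨.inl i, mem_map_of_mem _ (mem_univ i)⟩)
    (ψ := fun x j ↦ x ⟨.inr j, mem_map_of_mem _ (mem_univ j)⟩)
    (measurable_pi_lambda _ fun _ ↦ measurable_pi_apply _)
    (measurable_pi_lambda _ fun _ ↦ measurable_pi_apply _)

end Independence

lemma ite_eq_indicator_preimage {Ω α : Type*} [DecidableEq α] (X : Ω → α) (a : α) :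
    (fun ω ↦ if X ω = a then (1 : ℝ) else 0) = (X ⁻¹' {a}).indicator 1 := by
  ext ω
  by_cases hω : X ω = a <;> simp [hω]

section Indicator

variable {Ω α : Type*} [MeasurableSpace Ω] {P : Measure Ω} [MeasurableSpace α]
  [MeasurableSingletonClass α] [DecidableEq α] {X : Ω → α}

lemma integral_ite_eq_measureReal (hX : Measurable X) (a : α) :
    ∫ ω, (if X ω = a then (1 : ℝ) else 0) ∂P = P.real (X ⁻¹' {a}) := by
  rw [ite_eq_indicator_preimage, integral_indicator_one (hX (measurableSet_singleton a))]

lemma integrable_ite_eq [IsFiniteMeasure P] (hX : Measurable X) (a : α) :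
    Integrable (fun ω ↦ if X ω = a then (1 : ℝ) else 0) P := by
  rw [ite_eq_indicator_preimage]
  exact (integrable_const 1).indicator (hX (measurableSet_singleton a))

end Indicator

lemma aggW_eq_comp {Ω : Type*} {C d : ℕ} (X : Fin d → Ω → Fin C) (c a : Fin C) :
    (fun ω ↦ aggW d c X ω a) =
      (fun x : Fin d → Fin C ↦ aggW d c (fun k x ↦ x k) x a) ∘ fun ω k ↦ X k ω :=
  rfl

section Expectation

variable {Ω : Type*} [MeasurableSpace Ω] {P : Measure Ω} {C d : ℕ}

lemma measurable_aggW {X : Fin d → Ω → Fin C} (hX : ∀ k, Measurable (X k)) (c a : Fin C) :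
    Measurable fun ω ↦ aggW d c X ω a := by
  rw [aggW_eq_comp]
  exact (measurable_of_finite _).comp (measurable_pi_lambda _ hX)

lemma integrable_aggW [IsFiniteMeasure P] {X : Fin d → Ω → Fin C} (hX : ∀ k, Measurable (X k))
    (c a : Fin C) : Integrable (fun ω ↦ aggW d c X ω a) P := by
  rw [aggW_eq_comp]
  exact Integrable.of_finite.comp_measurable (measurable_pi_lambda _ hX)

lemma integral_aggW [IsProbabilityMeasure P] {X : Fin d → Ω → Fin C}
    (hX : ∀ k, Measurable (X k)) (c a : Fin C) :
    ∫ ω, aggW d c X ω a ∂P =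
      ((if a = c then 1 else 0) + ∑ k, P.real (X k ⁻¹' {a})) / ((d : ℝ) + 1) := by
  simp only [aggW, natCast_card_filter]
  rw [integral_div, integral_add (integrable_const _)
      (integrable_finsetSum _ fun k _ ↦ integrable_ite_eq (hX k) a),
    integral_finsetSum _ fun k _ ↦ integrable_ite_eq (hX k) a]
  simp [integral_ite_eq_measureReal (hX _)]

lemma ProbabilityTheory.IndepFun.indepFun_aggW {X Y : Fin d → Ω → Fin C}
    (hXY : IndepFun (fun ω k ↦ X k ω) (fun ω k ↦ Y k ω) P) (c c' a : Fin C) :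
    IndepFun (fun ω ↦ aggW d c X ω a) (fun ω ↦ aggW d c' Y ω a) P := by
  rw [aggW_eq_comp X, aggW_eq_comp Y]
  exact hXY.comp (measurable_of_finite _) (measurable_of_finite _)

lemma ProbabilityTheory.IndepFun.integral_sum_aggW_mul_aggW [IsFiniteMeasure P]
    {X Y : Fin d → Ω → Fin C} (hXY : IndepFun (fun ω k ↦ X k ω) (fun ω k ↦ Y k ω) P)
    (hX : ∀ k, Measurable (X k)) (hY : ∀ k, Measurable (Y k)) (c c' : Fin C) :
    ∫ ω, ∑ a, aggW d c X ω a * aggW d c' Y ω a ∂P =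
      ∑ a, (∫ ω, aggW d c X ω a ∂P) * ∫ ω, aggW d c' Y ω a ∂P := by
  have hXYa := hXY.indepFun_aggW c c'
  rw [integral_finsetSum]
  · exact sum_congr rfl fun a _ ↦ (hXYa a).integral_mul_eq_mul_integral
      (measurable_aggW hX c a).aestronglyMeasurable (measurable_aggW hY c' a).aestronglyMeasurable
  · exact fun a _ ↦ (hXYa a).integrable_mul (integrable_aggW hX c a) (integrable_aggW hY c' a)

end Expectation

noncomputable def nuMass {C : ℕ} (h : ℝ) (c a : Fin C) : ℝ :=
  if a = c then h else (1 - h) / ((C : ℝ) - 1)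

section Law

variable {Ω : Type*} [MeasurableSpace Ω] {P : Measure Ω} {C d : ℕ} {h : ℝ} {c : Fin C}

lemma HasLawNu.measureReal_preimage_singleton {Y : Ω → Fin C} (hY : HasLawNu P h c Y)
    (h0 : 0 ≤ h) (h1 : h ≤ 1) (a : Fin C) : P.real (Y ⁻¹' {a}) = nuMass h c a := by
  have hC : (1 : ℝ) ≤ C := by exact_mod_cast c.pos
  rw [measureReal_def, hY.2 a, ENNReal.toReal_ofReal]
  · rfl
  · split_ifs
    exacts [h0, div_nonneg (by linarith) (by linarith)]

lemma integral_aggW_of_hasLawNu [IsProbabilityMeasure P] {X : Fin d → Ω → Fin C}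
    (hX : ∀ k, HasLawNu P h c (X k)) (h0 : 0 ≤ h) (h1 : h ≤ 1) (a : Fin C) :
    ∫ ω, aggW d c X ω a ∂P = ((if a = c then 1 else 0) + d * nuMass h c a) / ((d : ℝ) + 1) := by
  simp [integral_aggW (fun k ↦ (hX k).1), (hX _).measureReal_preimage_singleton h0 h1]

end Law

lemma sum_mean_aggW_mul_mean_aggW {C : ℕ} (hC : 2 ≤ C) (d : ℕ) (h : ℝ) {c c' : Fin C}
    (hcc' : c ≠ c') :
    ∑ a, ((if a = c then 1 else 0) + d * nuMass h c a) / ((d : ℝ) + 1) *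
        (((if a = c' then 1 else 0) + d * nuMass h c' a) / ((d : ℝ) + 1)) =
      2 * (h * d + 1) * ((1 - h) * d) / (((C : ℝ) - 1) * ((d : ℝ) + 1) ^ 2) +
        ((C : ℝ) - 2) * ((1 - h) * d) ^ 2 / (((C : ℝ) - 1) ^ 2 * ((d : ℝ) + 1) ^ 2) := by
  have hc' : c' ∈ univ.erase c := mem_erase.2 ⟨hcc'.symm, mem_univ c'⟩
  rw [← add_sum_erase _ _ (mem_univ c), ← add_sum_erase _ _ hc']
  have hrest : ∀ a ∈ (univ.erase c).erase c',
      ((if a = c then 1 else 0) + d * nuMass h c a) / ((d : ℝ) + 1) *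
        (((if a = c' then 1 else 0) + d * nuMass h c' a) / ((d : ℝ) + 1)) =
      (d * ((1 - h) / ((C : ℝ) - 1)) / ((d : ℝ) + 1)) ^ 2 := by
    intro a ha
    obtain ⟨hac', hac⟩ : a ≠ c' ∧ a ≠ c := by simpa using ha
    simp [nuMass, hac, hac', sq]
  rw [sum_congr rfl hrest, sum_const, card_erase_of_mem hc', card_erase_of_mem (mem_univ c),
    card_univ, Fintype.card_fin, nsmul_eq_mul]
  have hC1 : (C : ℝ) - 1 ≠ 0 := by
    have : (2 : ℝ) ≤ C := by exact_mod_cast hC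
    linarith
  simp only [nuMass, if_pos, if_neg hcc', if_neg hcc'.symm]
  push_cast [Nat.sub_sub, Nat.cast_sub hC]
  field_simp
  ring

theorem expectation_similarity_different_class_general
    {Ω : Type*} [MeasurableSpace Ω] (P : Measure Ω) [IsProbabilityMeasure P]
    (C d : ℕ) (hC : 2 ≤ C) (h : ℝ) (h0 : 0 ≤ h) (h1 : h ≤ 1)
    (c c' : Fin C) (hcc' : c ≠ c') (V U : Fin d → Ω → Fin C)
    (hlawV : ∀ k, HasLawNu P h c (V k)) (hlawU : ∀ k, HasLawNu P h c' (U k))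
    (hindep : iIndepFun (Sum.elim V U) P) :
    ∫ ω, ∑ a, aggW d c V ω a * aggW d c' U ω a ∂P =
      2 * (h * d + 1) * ((1 - h) * d) / (((C : ℝ) - 1) * ((d : ℝ) + 1) ^ 2) +
        ((C : ℝ) - 2) * ((1 - h) * d) ^ 2 /
          (((C : ℝ) - 1) ^ 2 * ((d : ℝ) + 1) ^ 2) := by
  have hV k := (hlawV k).1
  have hU k := (hlawU k).1
  rw [(hindep.indepFun_sumElim hV hU).integral_sum_aggW_mul_aggW hV hU]
  simp only [integral_aggW_of_hasLawNu hlawV h0 h1, integral_aggW_of_hasLawNu hlawU h0 h1]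
  exact sum_mean_aggW_mul_mean_aggW hC d h hcc'

theorem expectation_similarity_different_class
    {Ω : Type*} [MeasurableSpace Ω] (P : Measure Ω) [IsProbabilityMeasure P]
    (C d : ℕ) (hC : 2 ≤ C) (hd : 1 ≤ d) (h : ℝ) (h0 : 0 ≤ h) (h1 : h ≤ 1)
    (c c' : Fin C) (hcc' : c ≠ c') (V U : Fin d → Ω → Fin C)
    (hlawV : ∀ k, HasLawNu P h c (V k)) (hlawU : ∀ k, HasLawNu P h c' (U k))
    (hindep : iIndepFun (Sum.elim V U) P) :
    ∫ ω, ∑ a, aggW d c V ω a * aggW d c' U ω a ∂P =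
      2 * (h * d + 1) * ((1 - h) * d) / (((C : ℝ) - 1) * ((d : ℝ) + 1) ^ 2) +
        ((C : ℝ) - 2) * ((1 - h) * d) ^ 2 /
          (((C : ℝ) - 1) ^ 2 * ((d : ℝ) + 1) ^ 2) :=
  expectation_similarity_different_class_general P C d hC h h0 h1 c c' hcc' V U hlawV hlawU hindep
end

section
/- (Theorem 2.) Let C = 2, let Â ∈ ℝ^{N×N} be row-stochastic, and let Z ∈ ℝ^{N×2} be a one-hot label matrix. Then every node v is diversification distinguishable with respect to S(I−Â, Z): (1) if the set {u : c_u = c_v} is nonempty, then the mean of S(I−Â, Z)_{v,u} over u with c_u = c_v is ≥ 0; and (2) if the set {u : c_u ≠ c_v} is nonempty, then the mean of S(I−Â, Z)_{v,u} over u with c_u ≠ c_v is ≤ 0. Consequently the graph diversification distinguishability value DD_{Â,Z}(𝒢), the fraction of diversification distinguishable nodes, equals 1. -/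
open scoped BigOperators Matrix Classical

/-- The post-aggregation similarity matrix `S(M, X) = (M X)(M X)ᵀ`. -/
def simMatrix {N F : ℕ} (M : Matrix (Fin N) (Fin N) ℝ)
    (X : Matrix (Fin N) (Fin F) ℝ) : Matrix (Fin N) (Fin N) ℝ :=
  (M * X) * (M * X)ᵀ

/-- A node `v` is diversification distinguishable w.r.t. a similarity matrix `S`:
the mean of `S v u` over same-class nodes `u` is `≥ 0` and the mean over
different-class nodes `u` is `≤ 0`. -/
def DivDistinguishable {N C : ℕ} (S : Matrix (Fin N) (Fin N) ℝ)
    (cl : Fin N → Fin C) (v : Fin N) : Prop :=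
  ((Finset.univ.filter fun u => cl u = cl v).Nonempty →
    0 ≤ (∑ u ∈ Finset.univ.filter (fun u => cl u = cl v), S v u) /
        ((Finset.univ.filter fun u => cl u = cl v).card : ℝ)) ∧
  ((Finset.univ.filter fun u => cl u ≠ cl v).Nonempty →
    (∑ u ∈ Finset.univ.filter (fun u => cl u ≠ cl v), S v u) /
        ((Finset.univ.filter fun u => cl u ≠ cl v).card : ℝ) ≤ 0)

/-!
Aggregating the one-hot labels with `Â` sends node `v` to the vector of weights `Â` gives to
each class. For two classes and row-stochastic `Â`, the row `v` of `(I - Â) Z` is therefore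
`r_v (e_{c_v} - e_{c'})`, where `r_v ≥ 0` is the weight `Â` puts on the other class `c'`.
Hence `S_{v,u} = ± 2 r_v r_u`, with sign `+` exactly when `c_u = c_v`: every term of the
same-class mean is nonnegative and every term of the different-class mean is nonpositive.
-/

lemma simMatrix_apply {N F : ℕ} (M : Matrix (Fin N) (Fin N) ℝ) (X : Matrix (Fin N) (Fin F) ℝ)
    (v u : Fin N) : simMatrix M X v u = ∑ c, (M * X) v c * (M * X) u c := by
  simp only [simMatrix, Matrix.mul_apply (M := M * X), Matrix.transpose_apply]

lemma divDistinguishable_of_sign {N C : ℕ} {S : Matrix (Fin N) (Fin N) ℝ} {cl : Fin N → Fin C}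
    {v : Fin N} (hsame : ∀ u, cl u = cl v → 0 ≤ S v u) (hdiff : ∀ u, cl u ≠ cl v → S v u ≤ 0) :
    DivDistinguishable S cl v := by
  refine ⟨fun _ => div_nonneg ?_ (Nat.cast_nonneg _),
    fun _ => div_nonpos_of_nonpos_of_nonneg ?_ (Nat.cast_nonneg _)⟩
  · exact Finset.sum_nonneg fun u hu => hsame u (Finset.mem_filter.1 hu).2
  · exact Finset.sum_nonpos fun u hu => hdiff u (Finset.mem_filter.1 hu).2

section OneHot

variable {n k : Type*} [Fintype n] [DecidableEq k] (A : Matrix n n ℝ) {Z : Matrix n k ℝ}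
  {cl : n → k}

lemma mul_oneHot_apply (hZ : ∀ v c, Z v c = if c = cl v then 1 else 0) (v : n) (c : k) :
    (A * Z) v c = ∑ j ∈ Finset.univ.filter (fun j => cl j = c), A v j := by
  simp only [Matrix.mul_apply, hZ, mul_ite, mul_one, mul_zero, Finset.sum_filter, eq_comm]

def crossClassWeight (cl : n → k) (v : n) : ℝ :=
  ∑ j ∈ Finset.univ.filter (fun j => cl j ≠ cl v), A v j

lemma crossClassWeight_nonneg (hA0 : ∀ i j, 0 ≤ A i j) (v : n) :
    0 ≤ crossClassWeight A cl v :=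
  Finset.sum_nonneg fun j _ => hA0 v j

end OneHot

lemma one_sub_mul_oneHot_apply_of_two {n : Type*} [Fintype n] [DecidableEq n]
    (A : Matrix n n ℝ) (hA1 : ∀ i, ∑ j, A i j = 1) {Z : Matrix n (Fin 2) ℝ} {cl : n → Fin 2}
    (hZ : ∀ v c, Z v c = if c = cl v then 1 else 0) (v : n) (c : Fin 2) :
    ((1 - A) * Z : Matrix n (Fin 2) ℝ) v c =
      if c = cl v then crossClassWeight A cl v else -crossClassWeight A cl v := by
  have hsplit := Finset.sum_filter_add_sum_filter_not Finset.univ (fun j => cl j = cl v) (A v)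
  rw [hA1 v] at hsplit
  rw [Matrix.sub_mul, Matrix.one_mul, Matrix.sub_apply, mul_oneHot_apply A hZ, hZ,
    crossClassWeight]
  split_ifs with hc
  · subst hc
    linarith
  · have hother : ∀ j, cl j = c ↔ ¬cl j = cl v := by omega
    simp only [hother, zero_sub]

lemma simMatrix_one_sub_oneHot_apply {N : ℕ} (A : Matrix (Fin N) (Fin N) ℝ)
    (hA1 : ∀ i, ∑ j, A i j = 1) {Z : Matrix (Fin N) (Fin 2) ℝ} {cl : Fin N → Fin 2}
    (hZ : ∀ v c, Z v c = if c = cl v then 1 else 0) (v u : Fin N) :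
    simMatrix (1 - A) Z v u =
      (if cl u = cl v then 2 else -2) * (crossClassWeight A cl v * crossClassWeight A cl u) := by
  rw [simMatrix_apply, Fin.sum_univ_two]
  simp only [one_sub_mul_oneHot_apply_of_two A hA1 hZ]
  rcases Fin.exists_fin_two.1 ⟨cl v, rfl⟩ with hv | hv <;>
    rcases Fin.exists_fin_two.1 ⟨cl u, rfl⟩ with hu | hu <;>
    simp only [hv, hu, Fin.isValue, ↓reduceIte, zero_ne_one, one_ne_zero, mul_neg, neg_mul,
      neg_neg] <;> ring

/-- Theorem 2: for binary classification (`C = 2`) with a row-stochastic aggregation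
operator, every node is diversification distinguishable, so `DD = 1`. -/
theorem binary_diversification_distinguishability
    {N : ℕ} (hN : 0 < N) (A : Matrix (Fin N) (Fin N) ℝ)
    (hA0 : ∀ i j, 0 ≤ A i j) (hA1 : ∀ i, ∑ j, A i j = 1)
    (Z : Matrix (Fin N) (Fin 2) ℝ) (cl : Fin N → Fin 2)
    (hZ : ∀ v c, Z v c = if c = cl v then 1 else 0) :
    (∀ v : Fin N, DivDistinguishable (simMatrix (1 - A) Z) cl v) ∧
      ((Finset.univ.filter fun v : Fin N =>
          DivDistinguishable (simMatrix (1 - A) Z) cl v).card : ℝ) / (N : ℝ) = 1 := by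
  have hr := crossClassWeight_nonneg A (cl := cl) hA0
  have hall : ∀ v, DivDistinguishable (simMatrix (1 - A) Z) cl v := fun v =>
    divDistinguishable_of_sign
      (fun u h => by
        rw [simMatrix_one_sub_oneHot_apply A hA1 hZ, if_pos h]
        exact mul_nonneg zero_le_two (mul_nonneg (hr v) (hr u)))
      (fun u h => by
        rw [simMatrix_one_sub_oneHot_apply A hA1 hZ, if_neg h, neg_mul]
        exact neg_nonpos.2 (mul_nonneg zero_le_two (mul_nonneg (hr v) (hr u))))
  refine ⟨hall, ?_⟩
  rw [Finset.filter_true_of_mem fun v _ => hall v, Finset.card_univ, Fintype.card_fin]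
  exact div_self (Nat.cast_ne_zero.2 hN.ne')
end
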